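/- arXiv:1707.01224 — 3 statements merged into one kernel-verified Lean document; each statement's English description precedes it below -/
import Mathlib

section
/- Let T be a locally finite tree rooted at r, with initial fire B_r(k). If there is a containment strategy for the sequence (f_n), then there is a containment strategy of the form s(V') for some finite vertex set V', where s(V') protects in round n the f_n vertices of V' closest to the root that are neither burning nor protected. -/
open scoped ENNReal NNReal

namespace Firefight

variable {V : Type*}

/-- Vertices protected before round `n+1`'s spread: the strategy `s` plays `s n` in round `n+1`. -/
def protSet (s : ℕ → Set V) : ℕ → Set V
  | 0 => ∅
  | n + 1 => protSet s n ∪ s n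

/-- Burning vertices after `n` rounds. -/
def burnSet (G : SimpleGraph V) (X₀ : Set V) (s : ℕ → Set V) : ℕ → Set V
  | 0 => X₀
  | n + 1 => burnSet G X₀ s n ∪
      {v | v ∉ protSet s (n + 1) ∧ ∃ u ∈ burnSet G X₀ s n, G.Adj u v}

/-- A strategy is valid for the budget sequence `f` if in round `n+1` it protects at most
`f (n+1)` vertices, none of which is already burning. -/
def ValidStrategy (G : SimpleGraph V) (f : ℕ → ℕ) (X₀ : Set V) (s : ℕ → Set V) : Prop :=
  ∀ n, (s n).Finite ∧ (s n).ncard ≤ f (n + 1) ∧ Disjoint (s n) (burnSet G X₀ s n)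

/-- The fire is contained: only finitely many vertices ever burn. -/
def ContainsFire (G : SimpleGraph V) (X₀ : Set V) (s : ℕ → Set V) : Prop :=
  (⋃ n, burnSet G X₀ s n).Finite

/-- `G` satisfies `f_n`-containment. -/
def Containment (G : SimpleGraph V) (f : ℕ → ℕ) : Prop :=
  ∀ X₀ : Set V, X₀.Finite → ∃ s, ValidStrategy G f X₀ s ∧ ContainsFire G X₀ s

/-- Exponential containment of rate `lam`: `f_n`-containment for some `f_n = O(lam ^ n)`. -/
def ExpContainment (G : SimpleGraph V) (lam : ℝ≥0∞) : Prop :=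
  ∃ f : ℕ → ℕ, (∃ c : ℝ≥0, ∀ n, (f n : ℝ≥0∞) ≤ c * lam ^ n) ∧ Containment G f

/-- The critical exponential containment rate. -/
noncomputable def lambdaC (G : SimpleGraph V) : ℝ≥0∞ :=
  sInf {lam | ExpContainment G lam}

/-- A set of edges whose removal leaves the root `r` in a finite component. -/
def IsCutset (G : SimpleGraph V) (r : V) (Cut : Set (Sym2 V)) : Prop :=
  Cut ⊆ G.edgeSet ∧ {v | (G.deleteEdges Cut).Reachable r v}.Finite

/-- The distance `|e|` of an edge from the root: the distance to its farther endpoint. -/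
noncomputable def edgeDist (G : SimpleGraph V) (r : V) (e : Sym2 V) : ℕ :=
  Sym2.lift ⟨fun a b => max (G.dist r a) (G.dist r b), fun a b => max_comm _ _⟩ e

/-- `∑_{e ∈ Cut} lam ^ {-|e|}`. -/
noncomputable def cutsetWeight (G : SimpleGraph V) (r : V) (lam : ℝ≥0∞)
    (Cut : Set (Sym2 V)) : ℝ≥0∞ :=
  ∑' e : Cut, (lam ^ edgeDist G r (e : Sym2 V))⁻¹

/-- The branching number of a tree rooted at `r`. -/
noncomputable def branchingNumber (G : SimpleGraph V) (r : V) : ℝ≥0∞ :=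
  sSup {lam : ℝ≥0∞ | ∃ ε : ℝ≥0∞, 0 < ε ∧ ∀ Cut, IsCutset G r Cut → ε ≤ cutsetWeight G r lam Cut}

/-- The ball of radius `k` about `r`. -/
def ball (G : SimpleGraph V) (r : V) (k : ℕ) : Set V :=
  {v | G.dist r v ≤ k}

end Firefight

open Firefight

/-!
Let `s` contain the fire, burning the finite set `B`, and take for `V'` the outer boundary of `B`,
which is finite by local finiteness. On a tree the fire started at `B_r(k)` only spreads away
from the root and reaches each vertex it ever burns as early as possible, so `s` must protect
every `v ∈ V'` by round `dist(r, v) - k`. The greedy strategy on `V'` meets all these deadlines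
by an exchange argument, and so, by induction on the rounds, it never burns more than `s` does.
-/

lemma Finset.exists_subset_of_least_keys {V : Type*} [DecidableEq V] (key : V → ℕ) (b : ℕ)
    (A : Finset V) :
    ∃ S ⊆ A, S.card = min b A.card ∧ ∀ v ∈ S, ∀ w ∈ A \ S, key v ≤ key w := by
  induction b generalizing A with
  | zero => exact ⟨∅, by simp⟩
  | succ b ih =>
    rcases A.eq_empty_or_nonempty with rfl | hA
    · exact ⟨∅, by simp⟩
    obtain ⟨v, hv, hmin⟩ := A.exists_min_image key hA
    obtain ⟨S, hSA, hcard, hkey⟩ := ih (A.erase v)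
    have hvS : v ∉ S := fun h => (Finset.mem_erase.1 (hSA h)).1 rfl
    refine ⟨insert v S, Finset.insert_subset hv (hSA.trans (A.erase_subset v)), ?_, ?_⟩
    · rw [Finset.card_insert_of_notMem hvS, hcard, Finset.card_erase_of_mem hv]
      have : 1 ≤ A.card := Finset.card_pos.2 hA
      omega
    · intro x hx w hw
      rw [Finset.mem_sdiff, Finset.mem_insert, not_or] at hw
      rcases Finset.mem_insert.1 hx with rfl | hx
      · exact hmin w hw.1
      · exact hkey x hx w (Finset.mem_sdiff.2 ⟨Finset.mem_erase.2 ⟨hw.2.1, hw.1⟩, hw.2.2⟩)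

namespace SimpleGraph

variable {V : Type*} {G : SimpleGraph V}

lemma Walk.notMem_support_of_length_lt_dist [DecidableEq V] {r p u : V} (P : G.Walk r p)
    (h : P.length < G.dist r u) : u ∉ P.support := fun hu =>
  (G.dist_le (P.takeUntil u hu)).not_gt (h.trans_le' (P.length_takeUntil_le_length hu))

lemma IsTree.eq_of_adj_of_dist_eq_add_one (ht : G.IsTree) {r p q u : V} (hp : G.Adj p u)
    (hq : G.Adj q u) (hpd : G.dist r u = G.dist r p + 1) (hqd : G.dist r u = G.dist r q + 1) :
    p = q := by
  classical
  obtain ⟨P, hP, hPl⟩ := (ht.connected r p).exists_path_of_dist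
  obtain ⟨Q, hQ, hQl⟩ := (ht.connected r q).exists_path_of_dist
  have := (ht.isAcyclic.subsingleton_path r u).elim
    ⟨_, hP.concat (P.notMem_support_of_length_lt_dist (by omega)) hp⟩
    ⟨_, hQ.concat (Q.notMem_support_of_length_lt_dist (by omega)) hq⟩
  exact (Walk.concat_inj (congrArg Subtype.val this)).1

end SimpleGraph

namespace Firefight

open SimpleGraph

variable {V : Type*} {G : SimpleGraph V} {f : ℕ → ℕ} {X₀ W : Set V} {s g : ℕ → Set V}

lemma protSet_mono (s : ℕ → Set V) : Monotone (protSet s) :=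
  monotone_nat_of_le_succ fun _ => Set.subset_union_left

lemma burnSet_mono (G : SimpleGraph V) (X₀ : Set V) (s : ℕ → Set V) :
    Monotone (burnSet G X₀ s) :=
  monotone_nat_of_le_succ fun _ => Set.subset_union_left

lemma subset_protSet_succ (s : ℕ → Set V) (n : ℕ) : s n ⊆ protSet s (n + 1) :=
  Set.subset_union_right

lemma mem_protSet {v : V} {n : ℕ} : v ∈ protSet s n ↔ ∃ m < n, v ∈ s m := by
  induction n with
  | zero => simp [protSet]
  | succ n ih =>
    simp only [protSet, Set.mem_union, ih]
    constructor
    · rintro (⟨m, hm, h⟩ | h)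
      · exact ⟨m, by omega, h⟩
      · exact ⟨n, by omega, h⟩
    · rintro ⟨m, hm, h⟩
      rcases Nat.lt_succ_iff_lt_or_eq.1 hm with h' | rfl
      · exact Or.inl ⟨m, h', h⟩
      · exact Or.inr h

lemma mem_burnSet_succ_of_adj {u v : V} {n : ℕ} (hu : u ∈ burnSet G X₀ s n) (hadj : G.Adj u v)
    (hv : v ∉ protSet s (n + 1)) : v ∈ burnSet G X₀ s (n + 1) :=
  Set.mem_union_right _ ⟨hv, u, hu, hadj⟩

lemma exists_strategy_eq_feedback (G : SimpleGraph V) (X₀ : Set V)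
    (c : ℕ → Set V → Set V → Set V) :
    ∃ s : ℕ → Set V, ∀ n, s n = c n (burnSet G X₀ s n) (protSet s n) := by
  let state : ℕ → Set V × Set V := fun n => Nat.rec (X₀, ∅) (fun n p =>
    (p.1 ∪ {v | v ∉ p.2 ∪ c n p.1 p.2 ∧ ∃ u ∈ p.1, G.Adj u v}, p.2 ∪ c n p.1 p.2)) n
  let s : ℕ → Set V := fun n => c n (state n).1 (state n).2
  have hstate : ∀ n, burnSet G X₀ s n = (state n).1 ∧ protSet s n = (state n).2 := by
    intro n
    induction n with
    | zero => exact ⟨rfl, rfl⟩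
    | succ n ih =>
      have hprot : protSet s (n + 1) = (state (n + 1)).2 := by
        simp only [protSet, ih.2]; rfl
      refine ⟨?_, hprot⟩
      simp only [burnSet, hprot, ih.1]
      rfl
  exact ⟨s, fun n => by rw [(hstate n).1, (hstate n).2]⟩

namespace ValidStrategy

lemma notMem_burnSet_of_mem (hs : ValidStrategy G f X₀ s) {v : V} {m : ℕ} (hv : v ∈ s m)
    (n : ℕ) : v ∉ burnSet G X₀ s n := by
  induction n with
  | zero => exact fun hb =>
      Set.disjoint_left.1 (hs m).2.2 hv (burnSet_mono G X₀ s (Nat.zero_le m) hb)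
  | succ n ih =>
    rintro (hb | hb)
    · exact ih hb
    · by_cases hmn : m ≤ n
      · exact hb.1 (mem_protSet.2 ⟨m, by omega, hv⟩)
      · exact Set.disjoint_left.1 (hs m).2.2 hv
          (burnSet_mono G X₀ s (by omega : n + 1 ≤ m) (Set.mem_union_right _ hb))

lemma notMem_protSet_of_mem_burnSet (hs : ValidStrategy G f X₀ s) {v : V} {n : ℕ}
    (hv : v ∈ burnSet G X₀ s n) (m : ℕ) : v ∉ protSet s m := fun hp => by
  obtain ⟨j, -, hj⟩ := mem_protSet.1 hp
  exact hs.notMem_burnSet_of_mem hj n hv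

lemma finite_protSet (hs : ValidStrategy G f X₀ s) (n : ℕ) : (protSet s n).Finite := by
  induction n with
  | zero => exact Set.finite_empty
  | succ n ih => exact ih.union (hs n).1

lemma ncard_protSet_le (hs : ValidStrategy G f X₀ s) (n : ℕ) :
    (protSet s n).ncard ≤ ∑ m ∈ Finset.range n, f (m + 1) := by
  induction n with
  | zero => simp [protSet]
  | succ n ih =>
    rw [Finset.sum_range_succ]
    calc (protSet s (n + 1)).ncard ≤ (protSet s n).ncard + (s n).ncard :=
          Set.ncard_union_le _ _
      _ ≤ _ := add_le_add ih (hs n).2.1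

end ValidStrategy

def available (G : SimpleGraph V) (X₀ W : Set V) (s : ℕ → Set V) (n : ℕ) : Set V :=
  W \ (burnSet G X₀ s n ∪ protSet s n)

/-- The paper's strategy `s(W)`, with the distance to the root generalised to an arbitrary `key`. -/
def IsGreedy (G : SimpleGraph V) (f : ℕ → ℕ) (X₀ W : Set V) (key : V → ℕ)
    (s : ℕ → Set V) : Prop :=
  ∀ n, s n ⊆ available G X₀ W s n ∧
    (s n).ncard = min (f (n + 1)) (available G X₀ W s n).ncard ∧
    ∀ v ∈ s n, ∀ w ∈ available G X₀ W s n \ s n, key v ≤ key w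

lemma exists_isGreedy (G : SimpleGraph V) (f : ℕ → ℕ) (X₀ : Set V) (hW : W.Finite)
    (key : V → ℕ) : ∃ s, IsGreedy G f X₀ W key s := by
  classical
  have hpick : ∀ (n : ℕ) (B P : Set V), ∃ S : Set V, S ⊆ W \ (B ∪ P) ∧
      S.ncard = min (f (n + 1)) (W \ (B ∪ P)).ncard ∧
      ∀ v ∈ S, ∀ w ∈ (W \ (B ∪ P)) \ S, key v ≤ key w := by
    intro n B P
    have hA : (W \ (B ∪ P)).Finite := hW.sdiff
    obtain ⟨S, hSA, hcard, hkey⟩ :=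
      Finset.exists_subset_of_least_keys key (f (n + 1)) hA.toFinset
    refine ⟨S, fun x hx => hA.mem_toFinset.1 (hSA hx), ?_, fun x hx w hw => ?_⟩
    · rw [Set.ncard_coe_finset, hcard, Set.ncard_eq_toFinset_card _ hA]
    · exact hkey x hx w (Finset.mem_sdiff.2 ⟨hA.mem_toFinset.2 hw.1, hw.2⟩)
  choose c hc using hpick
  obtain ⟨s, hs⟩ := exists_strategy_eq_feedback G X₀ c
  exact ⟨s, fun n => by rw [hs n]; exact hc n _ _⟩

namespace IsGreedy

variable {key : V → ℕ}

lemma validStrategy (hg : IsGreedy G f X₀ W key g) (hW : W.Finite) :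
    ValidStrategy G f X₀ g := fun n =>
  ⟨hW.subset ((hg n).1.trans Set.sdiff_subset), (hg n).2.1 ▸ min_le_left _ _,
    Set.disjoint_left.2 fun _ hv hb => ((hg n).1 hv).2 (Or.inl hb)⟩

lemma finite_protSet (hg : IsGreedy G f X₀ W key g) (hW : W.Finite) (n : ℕ) :
    (protSet g n).Finite :=
  (hg.validStrategy hW).finite_protSet n

lemma ncard_eq_and_key_le (hg : IsGreedy G f X₀ W key g) (hW : W.Finite) {v : V} {n : ℕ}
    (hv : v ∈ available G X₀ W g n \ g n) :
    (g n).ncard = f (n + 1) ∧ ∀ w ∈ g n, key w ≤ key v := by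
  obtain ⟨hsub, hcard, hkey⟩ := hg n
  refine ⟨?_, fun w hw => hkey w hw v hv⟩
  by_contra hne
  have hfin : (available G X₀ W g n).Finite := hW.subset Set.sdiff_subset
  have heq : g n = available G X₀ W g n :=
    Set.eq_of_subset_of_ncard_le hsub (by omega) hfin
  exact hv.2 (heq ▸ hv.1)

lemma ncard_protSet_eq (hg : IsGreedy G f X₀ W key g) (hW : W.Finite) {v : V} {n : ℕ}
    (hv : ∀ m < n, v ∈ available G X₀ W g m \ g m) :
    (protSet g n).ncard = ∑ m ∈ Finset.range n, f (m + 1) := by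
  induction n with
  | zero => simp [protSet]
  | succ n ih =>
    have hdisj : Disjoint (protSet g n) (g n) :=
      Set.disjoint_right.2 fun w hw hp => ((hg n).1 hw).2 (Or.inr hp)
    rw [protSet, Set.ncard_union_eq hdisj (hg.finite_protSet hW n)
        ((hg.validStrategy hW n).1), ih fun m hm => hv m (by omega),
      (hg.ncard_eq_and_key_le hW (hv n n.lt_succ_self)).1, Finset.sum_range_succ]

/-- Exchange argument: if `g` missed the deadline of `v`, it spent its whole budget up to then on
vertices with no later deadlines; `s` protects all of them and `v` too, exceeding that budget. -/
lemma mem_protSet_of_deadline (hg : IsGreedy G f X₀ W key g) (hW : W.Finite)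
    (hs : ValidStrategy G f X₀ s) (d : V → ℕ)
    (hdead : ∀ w ∈ W, w ∈ protSet s (d w)) (hmono : ∀ v w, key v ≤ key w → d v ≤ d w)
    {v : V} {n : ℕ} (hv : v ∈ W) (hvb : v ∉ burnSet G X₀ g n) (hd : d v ≤ n + 1) :
    v ∈ protSet g (n + 1) := by
  by_contra hvp
  have havail : ∀ m < n + 1, v ∈ available G X₀ W g m \ g m := fun m hm =>
    ⟨⟨hv, fun h => h.elim (fun hb => hvb (burnSet_mono G X₀ g (by omega) hb))
        (fun hp => hvp (protSet_mono g (by omega) hp))⟩,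
      fun hm' => hvp (protSet_mono g (by omega) (subset_protSet_succ g m hm'))⟩
  have hsub : insert v (protSet g (n + 1)) ⊆ protSet s (n + 1) := by
    rintro w (rfl | hw)
    · exact protSet_mono s hd (hdead w hv)
    · obtain ⟨m, hm, hwm⟩ := mem_protSet.1 hw
      have hkey := (hg.ncard_eq_and_key_le hW (havail m hm)).2 w hwm
      exact protSet_mono s ((hmono _ _ hkey).trans hd) (hdead w ((hg m).1 hwm).1)
  have hle := Set.ncard_le_ncard hsub (hs.finite_protSet (n + 1))
  rw [Set.ncard_insert_of_notMem hvp (hg.finite_protSet hW _),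
    hg.ncard_protSet_eq hW havail] at hle
  have := hs.ncard_protSet_le (n + 1)
  omega

end IsGreedy

def outerBoundary (G : SimpleGraph V) (S : Set V) : Set V :=
  {v | v ∉ S ∧ ∃ u ∈ S, G.Adj u v}

lemma outerBoundary_finite [G.LocallyFinite] {S : Set V} (hS : S.Finite) :
    (outerBoundary G S).Finite :=
  (hS.biUnion fun u _ => (G.neighborSet u).toFinite).subset
    fun _ ⟨_, _, hu, hadj⟩ => Set.mem_biUnion hu hadj

theorem IsGreedy.burnSet_subset {key : V → ℕ} (hs : ValidStrategy G f X₀ s)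
    (hW : (outerBoundary G (⋃ n, burnSet G X₀ s n)).Finite)
    (hg : IsGreedy G f X₀ (outerBoundary G (⋃ n, burnSet G X₀ s n)) key g) (d : V → ℕ)
    (hdead : ∀ v ∈ outerBoundary G (⋃ n, burnSet G X₀ s n), v ∈ protSet s (d v))
    (hspeed : ∀ n u v, u ∈ burnSet G X₀ s n → G.Adj u v → d v ≤ n + 1)
    (hmono : ∀ v w, key v ≤ key w → d v ≤ d w) (n : ℕ) :
    burnSet G X₀ g n ⊆ burnSet G X₀ s n := by
  induction n with
  | zero => exact subset_rfl
  | succ n ih =>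
    rintro w (hw | ⟨hwp, u, hu, hadj⟩)
    · exact burnSet_mono G X₀ s n.le_succ (ih hw)
    by_contra hws
    have hprot : w ∈ protSet s (n + 1) := by
      by_contra h
      exact hws (mem_burnSet_succ_of_adj (ih hu) hadj h)
    have hwB : w ∉ ⋃ m, burnSet G X₀ s m := fun h => by
      obtain ⟨m, hm⟩ := Set.mem_iUnion.1 h
      exact hs.notMem_protSet_of_mem_burnSet hm _ hprot
    exact hwp (hg.mem_protSet_of_deadline hW hs d hdead hmono
      ⟨hwB, u, Set.mem_iUnion_of_mem n (ih hu), hadj⟩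
      (fun hb => hwB (Set.mem_iUnion_of_mem n (ih hb))) (hspeed n u w (ih hu) hadj))

lemma burnSet_ball_subset_ball (hconn : G.Connected) (r : V) (k : ℕ) (n : ℕ) :
    burnSet G (ball G r k) s n ⊆ ball G r (k + n) := by
  induction n with
  | zero => exact subset_rfl
  | succ n ih =>
    rintro v (hv | ⟨-, u, hu, hadj⟩)
    · exact (show G.dist r v ≤ k + n from ih hv).trans (by omega)
    · have hu' : G.dist r u ≤ k + n := ih hu
      have := hconn.dist_triangle (u := r) (v := u) (w := v)
      rw [dist_eq_one_iff_adj.2 hadj] at this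
      exact this.trans (by omega)

variable {r : V} {k : ℕ}

lemma mem_burnSet_of_adj_of_dist_lt (ht : G.IsTree) (n : ℕ) {u p : V}
    (hu : u ∈ burnSet G (ball G r k) s n) (hadj : G.Adj p u) (hlt : G.dist r p < G.dist r u) :
    p ∈ burnSet G (ball G r k) s n := by
  induction n generalizing u p with
  | zero => exact (show G.dist r p ≤ k from hlt.le.trans hu)
  | succ n ih =>
    rcases hu with hu | ⟨-, u₀, hu₀, hadj₀⟩
    · exact Or.inl (ih hu hadj hlt)
    left
    rcases ht.dist_eq_dist_add_one_of_adj r hadj₀ with h | h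
    · exact ih (ih hu₀ hadj₀.symm (by omega)) hadj hlt
    · have hp : G.dist r u = G.dist r p + 1 := by
        rcases ht.dist_eq_dist_add_one_of_adj r hadj with h' | h' <;> omega
      rwa [ht.eq_of_adj_of_dist_eq_add_one hadj hadj₀ hp h]

lemma mem_burnSet_dist_sub (ht : G.IsTree) (hs : ValidStrategy G f (ball G r k) s)
    (n : ℕ) {u : V} (hu : u ∈ burnSet G (ball G r k) s n) :
    u ∈ burnSet G (ball G r k) s (G.dist r u - k) := by
  induction n generalizing u with
  | zero => rwa [Nat.sub_eq_zero_of_le hu]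
  | succ n ih =>
    obtain hu' | ⟨-, u₀, hu₀, hadj₀⟩ := id hu
    · exact ih hu'
    rcases ht.dist_eq_dist_add_one_of_adj r hadj₀ with h | h
    · exact ih (mem_burnSet_of_adj_of_dist_lt ht n hu₀ hadj₀.symm (by omega))
    by_cases hk : G.dist r u ≤ k
    · rw [Nat.sub_eq_zero_of_le hk]
      exact hk
    rw [show G.dist r u - k = G.dist r u₀ - k + 1 by omega]
    exact mem_burnSet_succ_of_adj (ih hu₀) hadj₀ (hs.notMem_protSet_of_mem_burnSet hu _)

lemma mem_protSet_of_mem_outerBoundary (ht : G.IsTree)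
    (hs : ValidStrategy G f (ball G r k) s) {v : V}
    (hv : v ∈ outerBoundary G (⋃ n, burnSet G (ball G r k) s n)) :
    v ∈ protSet s (G.dist r v - k) := by
  obtain ⟨hvB, u, hu, hadj⟩ := hv
  obtain ⟨m, hm⟩ := Set.mem_iUnion.1 hu
  have hnb : ∀ n, v ∉ burnSet G (ball G r k) s n := fun n h => hvB (Set.mem_iUnion_of_mem n h)
  have hfar : G.dist r v = G.dist r u + 1 := by
    rcases ht.dist_eq_dist_add_one_of_adj r hadj with h | h
    · exact absurd (mem_burnSet_of_adj_of_dist_lt ht m hm hadj.symm (by omega)) (hnb m)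
    · exact h
  have hk : k < G.dist r v := by
    by_contra h
    exact hnb 0 (show G.dist r v ≤ k by omega)
  rw [show G.dist r v - k = G.dist r u - k + 1 by omega]
  by_contra hp
  exact hnb _ (mem_burnSet_succ_of_adj (mem_burnSet_dist_sub ht hs m hm) hadj hp)

end Firefight

/-- if the initial fire `B_r(k)` on a tree can be contained, then it can be
contained by a greedy strategy `s(V')` for some finite vertex set `V'`: in round `n+1` it
protects `min (f (n+1))` (number available) vertices of `V'` that are neither burning nor
protected, choosing those closest to the root. -/
theorem stmt_4 {V : Type*} (T : SimpleGraph V) (hlf : T.LocallyFinite)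
    (ht : T.IsTree) (r : V) (f : ℕ → ℕ) (k : ℕ)
    (h : ∃ s, ValidStrategy T f (ball T r k) s ∧ ContainsFire T (ball T r k) s) :
    ∃ (V' : Finset V) (s : ℕ → Set V),
      (∀ n, s n ⊆ (V' : Set V) \ (burnSet T (ball T r k) s n ∪ protSet s n) ∧
        (s n).ncard =
          min (f (n + 1)) (((V' : Set V) \ (burnSet T (ball T r k) s n ∪ protSet s n)).ncard) ∧
        ∀ v ∈ s n, ∀ w ∈ ((V' : Set V) \ (burnSet T (ball T r k) s n ∪ protSet s n)) \ s n,
          T.dist r v ≤ T.dist r w) ∧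
      ValidStrategy T f (ball T r k) s ∧ ContainsFire T (ball T r k) s := by
  obtain ⟨s, hs, hc⟩ := h
  have hW := outerBoundary_finite (G := T) hc
  obtain ⟨g, hg⟩ := exists_isGreedy T f (ball T r k) hW.toFinset.finite_toSet (T.dist r)
  refine ⟨hW.toFinset, g, hg, hg.validStrategy hW.toFinset.finite_toSet, ?_⟩
  rw [hW.coe_toFinset] at hg
  have hspeed : ∀ n u v, u ∈ burnSet T (ball T r k) s n → T.Adj u v →
      T.dist r v - k ≤ n + 1 := fun n u v hu hadj => by
    have : T.dist r u ≤ k + n := burnSet_ball_subset_ball ht.connected r k n hu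
    rcases ht.dist_eq_dist_add_one_of_adj r hadj with h | h <;> omega
  refine hc.subset (Set.iUnion_subset fun n => (Set.subset_iUnion _ n).trans' ?_)
  exact hg.burnSet_subset hs hW (T.dist r · - k)
    (fun _ hv => mem_protSet_of_mem_outerBoundary ht hs hv) hspeed
    (fun _ _ h => Nat.sub_le_sub_right h k) n
end

section
/- For a locally finite tree T rooted at r, the flow definition and the cutset definition of the branching number agree: sup{λ : there is a nonzero flow θ from r to infinity with θ(e) ≤ λ^{-|e|} for every edge e} = sup{λ : inf_Π Σ_{e∈Π} λ^{-|e|} > 0}, the infimum over cutsets Π separating r from infinity. -/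
/-!
A flow with `θ(e) ≤ λ^{-|e|}` has strength at most the weight of every cutset: the strength is
the total flow through any generation, and every deep generation lies below the cutset.

Conversely, the minimal weight of a cut below `v` reaching `k` generations down obeys
`C_{k+1}(v) = min(λ^{-|v|}, ∑ C_k(w))`, the sum over the children `w` of `v`. These decrease in
`k`, and since the sums are finite their limit `C` satisfies `C(v) ≤ min(λ^{-|v|}, ∑ C(w))`. If
every cutset has weight at least `ε`, then `∑ C(w) ≥ ε` over the children of the root, and this
amount can be pushed down the tree giving each vertex `w` at most `C(w)`.
-/

open scoped ENNReal NNReal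

open Firefight

/-- A flow from `r` to infinity on a rooted tree, recorded by its values on parent edges:
`θ v` is the flow through the parent edge of `v` (and `θ r` is the strength), so that the
flow into each vertex equals the total flow to its children. -/
def IsFlow {V : Type*} (G : SimpleGraph V) (r : V) (θ : V → ℝ≥0∞) : Prop :=
  ∀ v : V, θ v = ∑' w : {w : V // G.Adj v w ∧ G.dist r w = G.dist r v + 1}, θ (w : V)

theorem Finset.sum_biUnion_le {ι α M : Type*} [DecidableEq α] [AddCommMonoid M] [PartialOrder M]
    [IsOrderedAddMonoid M] [CanonicallyOrderedAdd M] (s : Finset ι) (t : ι → Finset α)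
    (f : α → M) : ∑ x ∈ s.biUnion t, f x ≤ ∑ i ∈ s, ∑ x ∈ t i, f x := by
  classical
  induction s using Finset.induction_on with
  | empty => simp
  | insert i s hi ih =>
    rw [Finset.biUnion_insert, Finset.sum_insert hi]
    calc _ ≤ ∑ x ∈ t i ∪ s.biUnion t, f x + ∑ x ∈ t i ∩ s.biUnion t, f x := le_self_add
      _ = ∑ x ∈ t i, f x + ∑ x ∈ s.biUnion t, f x := Finset.sum_union_inter
      _ ≤ _ := by gcongr

theorem ENNReal.exists_le_sum_eq {α : Type*} (s : Finset α) (c : α → ℝ≥0∞) {m : ℝ≥0∞}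
    (hm : m ≤ ∑ a ∈ s, c a) : ∃ x : α → ℝ≥0∞, x ≤ c ∧ ∑ a ∈ s, x a = m := by
  classical
  induction s using Finset.induction_on generalizing m with
  | empty => exact ⟨0, fun _ => zero_le, by simpa using hm.antisymm' zero_le⟩
  | insert a s ha ih =>
    rw [Finset.sum_insert ha] at hm
    have hrest : m - min m (c a) ≤ ∑ b ∈ s, c b := by
      rw [tsub_le_iff_left, ← min_add_add_right]
      exact le_min le_self_add hm
    obtain ⟨x, hxc, hxs⟩ := ih hrest
    refine ⟨Function.update x a (min m (c a)), fun b => ?_, ?_⟩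
    · rcases eq_or_ne b a with rfl | hb
      · simp
      · simpa [hb] using hxc b
    · rw [Finset.sum_insert ha, Function.update_self,
        Finset.sum_congr rfl fun b hb => Function.update_of_ne (ne_of_mem_of_not_mem hb ha) _ _,
        hxs, add_tsub_cancel_of_le (min_le_left _ _)]

namespace SimpleGraph

variable {V : Type*} {T : SimpleGraph V} {r : V}

lemma Reachable.exists_adj_dist_add_one_eq {v : V} (h : T.Reachable r v) (hv : v ≠ r) :
    ∃ u, T.Adj u v ∧ T.dist r u + 1 = T.dist r v := by
  obtain ⟨W, hW⟩ := h.exists_walk_length_eq_dist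
  obtain ⟨u, hadj, W', hW'⟩ := W.reverse.exists_eq_cons_of_ne hv
  have hlen : W'.length + 1 = T.dist r v := by
    simpa [hW] using (congrArg Walk.length hW').symm
  refine ⟨u, hadj.symm, le_antisymm ?_ ?_⟩
  · simpa [← hlen] using T.dist_le W'.reverse
  · simpa [dist_eq_one_iff_adj.2 hadj.symm] using
      (h.trans hadj.reachable).dist_triangle_left v

variable (T r) in
open Classical in
/-- The neighbour of `v` one step closer to `r`, or `r` itself if there is none. -/
noncomputable def parent (v : V) : V :=
  if h : ∃ u, T.Adj u v ∧ T.dist r u + 1 = T.dist r v then h.choose else r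

lemma parent_adj_and_dist (hT : T.Connected) {v : V} (hv : v ≠ r) :
    T.Adj (T.parent r v) v ∧ T.dist r (T.parent r v) + 1 = T.dist r v := by
  have h := (hT r v).exists_adj_dist_add_one_eq hv
  rw [parent, dif_pos h]
  exact h.choose_spec

lemma Walk.dist_le_length_of_mem_support {u v x : V} (W : T.Walk u v) (hx : x ∈ W.support) :
    T.dist u x ≤ W.length := by
  classical
  exact (T.dist_le (W.takeUntil x hx)).trans (W.length_takeUntil_le_length hx)

/-- A geodesic to `u` extended by the edge `uv` is a path to `v`, and in a tree there is only one
such path. -/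
lemma IsTree.parent_eq (ht : T.IsTree) {u v : V} (hadj : T.Adj u v)
    (hd : T.dist r u + 1 = T.dist r v) : T.parent r v = u := by
  have hv : v ≠ r := by rintro rfl; simp at hd
  obtain ⟨hadj', hd'⟩ := parent_adj_and_dist ht.connected hv
  have geodesic_to {w : V} (hw : T.Adj w v) (hdw : T.dist r w + 1 = T.dist r v) :
      ∃ P : T.Walk r v, P.IsPath ∧ P.penultimate = w := by
    obtain ⟨P, hP⟩ := ht.connected.exists_walk_length_eq_dist r w
    refine ⟨P.concat hw, ?_, by simp⟩
    rw [← Walk.isPath_reverse_iff, Walk.reverse_concat, Walk.cons_isPath_iff,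
      Walk.support_reverse, List.mem_reverse, Walk.isPath_reverse_iff]
    exact ⟨P.isPath_of_length_eq_dist hP,
      fun hmem => by have := P.dist_le_length_of_mem_support hmem; omega⟩
  obtain ⟨P, hP, rfl⟩ := geodesic_to hadj hd
  obtain ⟨Q, hQ, hQp⟩ := geodesic_to hadj' hd'
  obtain rfl : Q = P :=
    congrArg Subtype.val ((ht.isAcyclic.subsingleton_path r v).elim ⟨Q, hQ⟩ ⟨P, hP⟩)
  exact hQp.symm

/-- A geodesic from `r` to the parent of `v` avoids `v`, and the parent edge of `v` is a bridge. -/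
lemma IsTree.not_reachable_of_parent_edge_mem (ht : T.IsTree) {E : Set (Sym2 V)} {v : V}
    (hv : v ≠ r) (he : s(T.parent r v, v) ∈ E) : ¬ (T.deleteEdges E).Reachable r v := by
  intro h
  obtain ⟨hadj, hd⟩ := parent_adj_and_dist ht.connected hv
  have hbridge := isAcyclic_iff_forall_adj_isBridge.1 ht.isAcyclic hadj
  have hr : (T.deleteEdges {s(T.parent r v, v)}).Reachable r (T.parent r v) := by
    obtain ⟨W, hW⟩ := ht.connected.exists_walk_length_eq_dist r (T.parent r v)
    refine reachable_deleteEdges_iff_exists_walk.2 ⟨W, fun hmem => ?_⟩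
    have := W.dist_le_length_of_mem_support (W.snd_mem_support_of_mem_edges hmem)
    omega
  exact hbridge (hr.symm.trans (h.mono (deleteEdges_anti (Set.singleton_subset_iff.2 he))))

lemma edgeDist_parent_edge (hT : T.Connected) {v : V} (hv : v ≠ r) :
    edgeDist T r s(T.parent r v, v) = T.dist r v := by
  have := (parent_adj_and_dist hT hv).2
  simp only [edgeDist, Sym2.lift_mk]
  omega

lemma parent_edge_injOn (hT : T.Connected) :
    Set.InjOn (fun v => s(T.parent r v, v)) {v | v ≠ r} := by
  intro a ha b hb hab
  have hda := (parent_adj_and_dist hT ha).2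
  have hdb := (parent_adj_and_dist hT hb).2
  rcases Sym2.eq_iff.1 hab with ⟨-, h⟩ | ⟨h, h'⟩
  · exact h
  · rw [h] at hda
    rw [← h'] at hdb
    omega

lemma sum_le_cutsetWeight (hT : T.Connected) {A : Finset V} {Cut : Set (Sym2 V)} (lam : ℝ≥0∞)
    (hA : ∀ a ∈ A, a ≠ r ∧ s(T.parent r a, a) ∈ Cut) :
    ∑ a ∈ A, (lam ^ T.dist r a)⁻¹ ≤ cutsetWeight T r lam Cut := by
  let f (a : A) : Cut := ⟨s(T.parent r a, a), (hA a a.2).2⟩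
  have hf : Function.Injective f := fun a b hab =>
    Subtype.ext (parent_edge_injOn hT (hA a a.2).1 (hA b b.2).1 (congrArg Subtype.val hab))
  rw [← Finset.tsum_subtype]
  refine le_of_eq_of_le ?_ (ENNReal.tsum_comp_le_tsum_of_injective hf _)
  exact tsum_congr fun a => by rw [edgeDist_parent_edge hT (hA a a.2).1]

lemma cutsetWeight_image_parent_edge_le [DecidableEq V] (hT : T.Connected) {A : Finset V}
    (lam : ℝ≥0∞) (hAr : ∀ a ∈ A, a ≠ r) :
    cutsetWeight T r lam (A.image fun a => s(T.parent r a, a)) ≤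
      ∑ a ∈ A, (lam ^ T.dist r a)⁻¹ := by
  rw [cutsetWeight, Finset.tsum_subtype' (A.image _) fun e => (lam ^ edgeDist T r e)⁻¹]
  refine (Finset.sum_image_le_of_nonneg fun _ _ => zero_le).trans_eq ?_
  exact Finset.sum_congr rfl fun a ha => by rw [edgeDist_parent_edge hT (hAr a ha)]

variable [T.LocallyFinite]

variable (T r) in
noncomputable def children (v : V) : Finset V :=
  {w ∈ T.neighborFinset v | T.dist r w = T.dist r v + 1}

lemma mem_children {v w : V} : w ∈ T.children r v ↔ T.Adj v w ∧ T.dist r w = T.dist r v + 1 := by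
  simp [children]

lemma IsTree.mem_children_iff (ht : T.IsTree) {v w : V} :
    w ∈ T.children r v ↔ w ≠ r ∧ T.parent r w = v := by
  rw [mem_children]
  constructor
  · rintro ⟨hadj, hd⟩
    exact ⟨by rintro rfl; simp at hd, ht.parent_eq hadj hd.symm⟩
  · rintro ⟨hw, rfl⟩
    obtain ⟨hadj, hd⟩ := parent_adj_and_dist ht.connected hw
    exact ⟨hadj, hd.symm⟩

lemma IsTree.pairwise_disjoint_children (ht : T.IsTree) :
    Pairwise (Function.onFun Disjoint (T.children r)) := fun _ _ hne =>
  Finset.disjoint_left.2 fun _ hw hw' =>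
    hne (((ht.mem_children_iff.1 hw).2).symm.trans (ht.mem_children_iff.1 hw').2)

lemma isFlow_iff {θ : V → ℝ≥0∞} : IsFlow T r θ ↔ ∀ v, θ v = ∑ w ∈ T.children r v, θ w := by
  refine forall_congr' fun v => Eq.congr_right ?_
  have hset : {w | T.Adj v w ∧ T.dist r w = T.dist r v + 1} = (T.children r v : Set V) := by
    ext; simp [mem_children]
  exact (tsum_congr_set_coe θ hset).trans (Finset.tsum_subtype _ θ)

section generation

variable [DecidableEq V]

variable (T r) in
noncomputable def generation : ℕ → V → Finset V
  | 0, v => {v}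
  | k + 1, v => (generation k v).biUnion (T.children r)

lemma generation_add (i j : ℕ) (v : V) :
    T.generation r (i + j) v = (T.generation r i v).biUnion (T.generation r j) := by
  induction j with
  | zero => simp [generation]
  | succ j ih => rw [← add_assoc, generation, ih, Finset.biUnion_biUnion]; rfl

lemma generation_succ' (k : ℕ) (v : V) :
    T.generation r (k + 1) v = (T.children r v).biUnion (T.generation r k) := by
  rw [add_comm, generation_add]
  simp [generation]

lemma dist_of_mem_generation {k : ℕ} {v u : V} (hu : u ∈ T.generation r k v) :
    T.dist r u = T.dist r v + k := by
  induction k generalizing u with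
  | zero => simp_all [generation]
  | succ k ih =>
    obtain ⟨p, hp, hu⟩ := Finset.mem_biUnion.1 hu
    rw [(mem_children.1 hu).2, ih hp, add_assoc]

lemma mem_generation_dist (hT : T.Connected) (v : V) : v ∈ T.generation r (T.dist r v) r := by
  induction h : T.dist r v generalizing v with
  | zero => simp [generation, (hT.dist_eq_zero_iff).1 h]
  | succ k ih =>
    have hv : v ≠ r := by rintro rfl; simp at h
    obtain ⟨hadj, hd⟩ := parent_adj_and_dist hT hv
    exact Finset.mem_biUnion.2 ⟨_, ih _ (by omega), mem_children.2 ⟨hadj, by omega⟩⟩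

lemma finite_setOf_dist_le (hT : T.Connected) (N : ℕ) : {v | T.dist r v ≤ N}.Finite := by
  refine ((Finset.range (N + 1)).biUnion fun k => T.generation r k r).finite_toSet.subset ?_
  intro v hv
  simpa using ⟨T.dist r v, hv, mem_generation_dist hT v⟩

lemma IsTree.not_reachable_of_mem_generation (ht : T.IsTree)
    {E : Set (Sym2 V)} {a v : V} {k : ℕ} (ha : a ≠ r) (he : s(T.parent r a, a) ∈ E)
    (hv : v ∈ T.generation r k a) : ¬ (T.deleteEdges E).Reachable r v := by
  induction k generalizing v with
  | zero =>
    obtain rfl : v = a := by simpa [generation] using hv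
    exact ht.not_reachable_of_parent_edge_mem ha he
  | succ k ih =>
    obtain ⟨p, hp, hvp⟩ := Finset.mem_biUnion.1 hv
    obtain ⟨hvr, rfl⟩ := ht.mem_children_iff.1 hvp
    intro h
    by_cases hpv : s(T.parent r v, v) ∈ E
    · exact ht.not_reachable_of_parent_edge_mem hvr hpv h
    · refine ih hp (h.trans (Adj.reachable ?_))
      rw [deleteEdges_adj, Sym2.eq_swap]
      exact ⟨(parent_adj_and_dist ht.connected hvr).1.symm, hpv⟩

lemma IsTree.sum_generation (ht : T.IsTree) {θ : V → ℝ≥0∞} (hθ : IsFlow T r θ) (k : ℕ) (v : V) :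
    ∑ u ∈ T.generation r k v, θ u = θ v := by
  induction k with
  | zero => simp [generation]
  | succ k ih =>
    rw [generation, Finset.sum_biUnion (ht.pairwise_disjoint_children.set_pairwise _), ← ih]
    exact Finset.sum_congr rfl fun u _ => (isFlow_iff.1 hθ u).symm

variable (T r) in
def CoversGeneration (A : Finset V) (k : ℕ) (v : V) : Prop :=
  ∀ u ∈ T.generation r k v, ∃ a ∈ A, ∃ j, u ∈ T.generation r j a

lemma IsTree.le_sum_of_coversGeneration (ht : T.IsTree) {θ : V → ℝ≥0∞} (hθ : IsFlow T r θ)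
    {A : Finset V} {k : ℕ} {v : V} (hA : T.CoversGeneration r A k v) :
    θ v ≤ ∑ a ∈ A, θ a :=
  calc θ v = ∑ u ∈ T.generation r k v, θ u := (ht.sum_generation hθ k v).symm
    _ ≤ ∑ u ∈ A.biUnion fun a => T.generation r (T.dist r v + k - T.dist r a) a, θ u := by
        refine Finset.sum_le_sum_of_subset fun u hu => ?_
        obtain ⟨a, ha, j, hj⟩ := hA u hu
        have := dist_of_mem_generation hu
        have := dist_of_mem_generation hj
        exact Finset.mem_biUnion.2 ⟨a, ha, by rwa [show T.dist r v + k - T.dist r a = j by omega]⟩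
    _ ≤ ∑ a ∈ A, ∑ u ∈ T.generation r (T.dist r v + k - T.dist r a) a, θ u :=
        Finset.sum_biUnion_le _ _ _
    _ = ∑ a ∈ A, θ a := Finset.sum_congr rfl fun a _ => ht.sum_generation hθ _ a

/-- The vertices just outside the (finite) component of `r` cover every deep enough
generation. -/
lemma IsTree.exists_coversGeneration_of_isCutset (ht : T.IsTree) {Cut : Set (Sym2 V)}
    (hCut : IsCutset T r Cut) : ∃ A : Finset V, ∃ N, T.CoversGeneration r A N r ∧
      ∀ a ∈ A, a ≠ r ∧ s(T.parent r a, a) ∈ Cut := by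
  set K := hCut.2.toFinset
  have hK (v : V) : v ∈ K ↔ (T.deleteEdges Cut).Reachable r v := hCut.2.mem_toFinset
  set A := {a ∈ K.biUnion (T.children r) | a ∉ K}
  have below_K_or_A (k : ℕ) : ∀ u ∈ T.generation r k r, u ∈ K ∨ ∃ a ∈ A, ∃ j,
      u ∈ T.generation r j a := by
    induction k with
    | zero => simpa [generation] using .inl ((hK r).2 (Reachable.refl r))
    | succ k ih =>
      intro u hu
      obtain ⟨p, hp, hup⟩ := Finset.mem_biUnion.1 hu
      rcases ih p hp with hpK | ⟨a, ha, j, hpa⟩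
      · by_cases huK : u ∈ K
        · exact .inl huK
        · refine .inr ⟨u, ?_, 0, by simp [generation]⟩
          simpa [A, huK] using ⟨p, hpK, hup⟩
      · exact .inr ⟨a, ha, j + 1, Finset.mem_biUnion.2 ⟨p, hpa, hup⟩⟩
  refine ⟨A, K.sup (T.dist r) + 1, fun u hu => (below_K_or_A _ u hu).resolve_left fun huK => ?_,
    fun a ha => ?_⟩
  · have := K.le_sup (f := T.dist r) huK
    have := dist_of_mem_generation hu
    rw [dist_self, zero_add] at this
    omega
  · obtain ⟨⟨p, hp, hap⟩, haK⟩ : (∃ p ∈ K, a ∈ T.children r p) ∧ a ∉ K := by simpa [A] using ha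
    obtain ⟨har, rfl⟩ := ht.mem_children_iff.1 hap
    refine ⟨har, by_contra fun hnot => haK ((hK a).2 (((hK _).1 hp).trans (Adj.reachable ?_)))⟩
    exact deleteEdges_adj.2 ⟨(parent_adj_and_dist ht.connected har).1, hnot⟩

lemma CoversGeneration.biUnion_children {A : V → Finset V} {k : ℕ} {v : V}
    (hA : ∀ w ∈ T.children r v, T.CoversGeneration r (A w) k w) :
    T.CoversGeneration r ((T.children r v).biUnion A) (k + 1) v := by
  intro u hu
  rw [generation_succ'] at hu
  obtain ⟨w, hw, huw⟩ := Finset.mem_biUnion.1 hu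
  obtain ⟨a, ha, j, hj⟩ := hA w hw u huw
  exact ⟨a, Finset.mem_biUnion.2 ⟨w, hw, ha⟩, j, hj⟩

lemma IsTree.isCutset_image_parent_edge (ht : T.IsTree) {A : Finset V} {N : ℕ}
    (hA : T.CoversGeneration r A N r) (hAr : ∀ a ∈ A, a ≠ r) :
    IsCutset T r (A.image fun a => s(T.parent r a, a)) := by
  refine ⟨?_, (finite_setOf_dist_le (r := r) ht.connected N).subset fun v hv => ?_⟩
  · simp only [Finset.coe_image, Set.image_subset_iff]
    exact fun a ha => (parent_adj_and_dist ht.connected (hAr a ha)).1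
  · by_contra hlt
    have hvgen := mem_generation_dist (r := r) ht.connected v
    rw [show T.dist r v = N + (T.dist r v - N) by simp only [Set.mem_ofPred_eq, not_le] at hlt; omega, generation_add] at hvgen
    obtain ⟨u, hu, hvu⟩ := Finset.mem_biUnion.1 hvgen
    obtain ⟨a, ha, j, hua⟩ := hA u hu
    have hva : v ∈ T.generation r (j + (T.dist r v - N)) a := by
      rw [generation_add]
      exact Finset.mem_biUnion.2 ⟨u, hua, hvu⟩
    exact ht.not_reachable_of_mem_generation (hAr a ha)
      (Finset.mem_image_of_mem (fun a => s(T.parent r a, a)) ha) hva hv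

end generation

theorem IsTree.flow_le_cutsetWeight (ht : T.IsTree) {θ : V → ℝ≥0∞} (hθ : IsFlow T r θ)
    {lam : ℝ≥0∞} (hcap : ∀ v, v ≠ r → θ v ≤ (lam ^ T.dist r v)⁻¹) {Cut : Set (Sym2 V)}
    (hCut : IsCutset T r Cut) : θ r ≤ cutsetWeight T r lam Cut := by
  classical
  obtain ⟨A, N, hcov, hA⟩ := ht.exists_coversGeneration_of_isCutset hCut
  calc θ r ≤ ∑ a ∈ A, θ a := ht.le_sum_of_coversGeneration hθ hcov
    _ ≤ ∑ a ∈ A, (lam ^ T.dist r a)⁻¹ := Finset.sum_le_sum fun a ha => hcap a (hA a ha).1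
    _ ≤ cutsetWeight T r lam Cut := sum_le_cutsetWeight ht.connected lam hA

variable (T r) in
/-- The recursion for the least `c`-weight of a set of vertices below `v` meeting every path
from `v` to its `k`-th generation. -/
noncomputable def minCutUpTo (c : V → ℝ≥0∞) : ℕ → V → ℝ≥0∞
  | 0, v => c v
  | k + 1, v => min (c v) (∑ w ∈ T.children r v, minCutUpTo c k w)

variable (T r) in
noncomputable def minCut (c : V → ℝ≥0∞) (v : V) : ℝ≥0∞ :=
  ⨅ k, T.minCutUpTo r c k v

lemma antitone_minCutUpTo (c : V → ℝ≥0∞) (v : V) : Antitone fun k => T.minCutUpTo r c k v := by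
  refine antitone_nat_of_succ_le fun k => ?_
  induction k generalizing v with
  | zero => exact min_le_left _ _
  | succ k ih => exact min_le_min le_rfl (Finset.sum_le_sum fun w _ => ih w)

lemma iInf_sum_minCutUpTo (c : V → ℝ≥0∞) (s : Finset V) :
    ⨅ k, ∑ w ∈ s, T.minCutUpTo r c k w = ∑ w ∈ s, T.minCut r c w :=
  ENNReal.iInf_sum fun _ i j => ⟨max i j, fun w _ =>
    ⟨antitone_minCutUpTo c w (le_max_left i j), antitone_minCutUpTo c w (le_max_right i j)⟩⟩

lemma minCut_le (c : V → ℝ≥0∞) (v : V) : T.minCut r c v ≤ c v :=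
  iInf_le (fun k => T.minCutUpTo r c k v) 0

lemma minCut_le_sum_children (c : V → ℝ≥0∞) (v : V) :
    T.minCut r c v ≤ ∑ w ∈ T.children r v, T.minCut r c w := by
  rw [← iInf_sum_minCutUpTo]
  exact le_iInf fun k => (iInf_le _ (k + 1)).trans (min_le_right _ _)

lemma exists_coversGeneration_sum_le_minCutUpTo [DecidableEq V] (c : V → ℝ≥0∞) (k : ℕ) (v : V) :
    ∃ A : Finset V, T.CoversGeneration r A k v ∧ (∀ a ∈ A, T.dist r v ≤ T.dist r a) ∧
      ∑ a ∈ A, c a ≤ T.minCutUpTo r c k v := by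
  induction k generalizing v with
  | zero => exact ⟨{v}, fun u hu => ⟨v, by simp, 0, hu⟩, by simp, by simp [minCutUpTo]⟩
  | succ k ih =>
    by_cases hv : c v ≤ ∑ w ∈ T.children r v, T.minCutUpTo r c k w
    · exact ⟨{v}, fun u hu => ⟨v, by simp, k + 1, hu⟩, by simp, by simp [minCutUpTo, hv]⟩
    choose A hAcov hAdist hAsum using ih
    refine ⟨(T.children r v).biUnion A, CoversGeneration.biUnion_children fun w _ => hAcov w,
      fun a ha => ?_, ?_⟩
    · obtain ⟨w, hw, haw⟩ := Finset.mem_biUnion.1 ha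
      have := hAdist w a haw
      have := (mem_children.1 hw).2
      omega
    · calc ∑ a ∈ (T.children r v).biUnion A, c a
          ≤ ∑ w ∈ T.children r v, ∑ a ∈ A w, c a := Finset.sum_biUnion_le _ _ _
        _ ≤ ∑ w ∈ T.children r v, T.minCutUpTo r c k w := Finset.sum_le_sum fun w _ => hAsum w
        _ = T.minCutUpTo r c (k + 1) v := by rw [minCutUpTo, min_eq_right (not_le.1 hv).le]

lemma IsTree.le_sum_minCut_children (ht : T.IsTree) {lam ε : ℝ≥0∞}
    (hc : ∀ Cut, IsCutset T r Cut → ε ≤ cutsetWeight T r lam Cut) :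
    ε ≤ ∑ w ∈ T.children r r, T.minCut r (fun v => (lam ^ T.dist r v)⁻¹) w := by
  classical
  rw [← iInf_sum_minCutUpTo]
  refine le_iInf fun k => ?_
  choose A hAcov hAdist hAsum using
    exists_coversGeneration_sum_le_minCutUpTo (T := T) (r := r) (fun v => (lam ^ T.dist r v)⁻¹) k
  set B := (T.children r r).biUnion A
  have hBr : ∀ a ∈ B, a ≠ r := by
    intro a ha
    obtain ⟨w, hw, haw⟩ := Finset.mem_biUnion.1 ha
    have h₁ := hAdist w a haw
    have h₂ := (mem_children.1 hw).2
    rintro rfl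
    simp only [dist_self] at h₁ h₂
    omega
  calc ε ≤ cutsetWeight T r lam (B.image fun a => s(T.parent r a, a)) :=
        hc _ (ht.isCutset_image_parent_edge
          (CoversGeneration.biUnion_children fun w _ => hAcov w) hBr)
    _ ≤ ∑ a ∈ B, (lam ^ T.dist r a)⁻¹ := cutsetWeight_image_parent_edge_le ht.connected lam hBr
    _ ≤ ∑ w ∈ T.children r r, ∑ a ∈ A w, (lam ^ T.dist r a)⁻¹ := Finset.sum_biUnion_le _ _ _
    _ ≤ _ := Finset.sum_le_sum fun w _ => hAsum w

variable (T r) in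
/-- The value `m` is handed down from the root, each vertex distributing what it receives among
its children according to `split`; a vertex `v` receives `T.pushDown r split m (T.dist r v) v`. -/
noncomputable def pushDown (split : V → ℝ≥0∞ → V → ℝ≥0∞) (m : ℝ≥0∞) : ℕ → V → ℝ≥0∞
  | 0, _ => m
  | n + 1, v => split (T.parent r v) (pushDown split m n (T.parent r v)) v

/-- Each vertex splits what it receives among its children, giving no child `w` more than `g w`;
this is possible since a vertex `v ≠ r` receives at most `g v ≤ ∑ w ∈ T.children r v, g w`. -/
theorem IsTree.exists_isFlow_le (ht : T.IsTree) (g : V → ℝ≥0∞)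
    (hg : ∀ v, g v ≤ ∑ w ∈ T.children r v, g w) {m : ℝ≥0∞}
    (hm : m ≤ ∑ w ∈ T.children r r, g w) :
    ∃ θ, IsFlow T r θ ∧ θ r = m ∧ ∀ v, v ≠ r → θ v ≤ g v := by
  choose split hsplit_le hsplit_sum using fun v (m : ℝ≥0∞) =>
    ENNReal.exists_le_sum_eq (T.children r v) g (min_le_right m _)
  let θ v := T.pushDown r split m (T.dist r v) v
  have hθ_child (v : V) : ∀ w ∈ T.children r v, θ w = split v (θ v) w := by
    intro w hw
    obtain ⟨-, hpar⟩ := ht.mem_children_iff.1 hw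
    simp only [θ, (mem_children.1 hw).2, pushDown, hpar]
  have hθ_le (v : V) (hv : v ≠ r) : θ v ≤ g v := by
    rw [hθ_child _ v (ht.mem_children_iff.2 ⟨hv, rfl⟩)]
    exact hsplit_le _ _ v
  have hθ_root : θ r = m := by simp [θ, pushDown]
  refine ⟨θ, isFlow_iff.2 fun v => ?_, hθ_root, hθ_le⟩
  have hbound : θ v ≤ ∑ w ∈ T.children r v, g w := by
    rcases eq_or_ne v r with rfl | hv
    · exact hθ_root ▸ hm
    · exact (hθ_le v hv).trans (hg v)
  rw [Finset.sum_congr rfl (hθ_child v), hsplit_sum, min_eq_left hbound]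

theorem IsTree.exists_isFlow_of_le_cutsetWeight (ht : T.IsTree) {lam ε : ℝ≥0∞} (hε : 0 < ε)
    (hc : ∀ Cut, IsCutset T r Cut → ε ≤ cutsetWeight T r lam Cut) :
    ∃ θ, IsFlow T r θ ∧ 0 < θ r ∧ ∀ v, v ≠ r → θ v ≤ (lam ^ T.dist r v)⁻¹ := by
  obtain ⟨θ, hθ, hroot, hle⟩ := ht.exists_isFlow_le (T.minCut r fun v => (lam ^ T.dist r v)⁻¹)
    (minCut_le_sum_children _) le_rfl
  exact ⟨θ, hθ, hroot ▸ hε.trans_le (ht.le_sum_minCut_children hc),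
    fun v hv => (hle v hv).trans (minCut_le _ v)⟩

end SimpleGraph

theorem stmt_9_general {V : Type*} (T : SimpleGraph V) (hlf : T.LocallyFinite)
    (ht : T.IsTree) (r : V) :
    sSup {lam : ℝ≥0∞ | ∃ θ : V → ℝ≥0∞, IsFlow T r θ ∧ 0 < θ r ∧
        ∀ v : V, v ≠ r → θ v ≤ (lam ^ T.dist r v)⁻¹} = branchingNumber T r := by
  refine le_antisymm (sSup_le ?_) (sSup_le ?_)
  · rintro lam ⟨θ, hθ, hpos, hcap⟩
    exact le_sSup ⟨θ r, hpos, fun Cut hCut => ht.flow_le_cutsetWeight hθ hcap hCut⟩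
  · rintro lam ⟨ε, hε, hc⟩
    exact le_sSup (ht.exists_isFlow_of_le_cutsetWeight hε hc)

/-- max-flow min-cut: the flow definition and the cutset definition of the
branching number agree. -/
theorem stmt_9 {V : Type*} (T : SimpleGraph V) [Infinite V] (hlf : T.LocallyFinite)
    (ht : T.IsTree) (r : V) :
    sSup {lam : ℝ≥0∞ | ∃ θ : V → ℝ≥0∞, IsFlow T r θ ∧ 0 < θ r ∧
        ∀ v : V, v ≠ r → θ v ≤ (lam ^ T.dist r v)⁻¹} = branchingNumber T r :=
  stmt_9_general T hlf ht r
end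

section
/- A Cayley graph of a finitely generated group of exponential growth (growth rate α > 1) does not satisfy polynomial containment: for every polynomial p, the graph does not satisfy p(n)-containment. -/
open scoped ENNReal NNReal

open Firefight

/-- The Cayley graph of a group `Γ` with respect to a set `S` of generators
(edges correspond to right multiplication by a generator or its inverse). -/
def cayley (Γ : Type*) [Group Γ] (S : Set Γ) : SimpleGraph Γ where
  Adj v w := v ≠ w ∧ (v⁻¹ * w ∈ S ∨ w⁻¹ * v ∈ S)
  symm := ⟨fun v w h => ⟨h.1.symm, h.2.symm⟩⟩
  loopless := ⟨fun v h => h.1 rfl⟩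


/-!
Fix `1 < μ < λ < α` and light the ball of radius `R`. Since the fire is contained and advances at
unit speed, every vertex at distance `R + n` (for `n` large) lies at distance `n - i` from a vertex
protected by round `i` at distance `R + i`. Translating spheres in the Cayley graph, the sphere
sizes `a D` therefore satisfy `a (R + n) ≤ ∑_{1 ≤ i ≤ n} P i * a (n - i)`, with `P i` the total
budget of the first `i` rounds. As `P` is polynomial, `∑ P i μ⁻ⁱ < ∞`, so for `R` large the
inequality propagates `a D ≤ K μ ^ D`. Hence balls grow like `O(μ ^ k)`, against `λ ^ k ≤ |B_k|`.
-/

open Filter Topology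
open scoped Polynomial

namespace SimpleGraph

variable {V W : Type*} {G : SimpleGraph V} {G' : SimpleGraph W}

lemma Hom.edist_map_le (f : G →g G') (u v : V) : G'.edist (f u) (f v) ≤ G.edist u v := by
  by_cases h : G.Reachable u v
  · obtain ⟨p, hp⟩ := h.exists_walk_length_eq_edist
    rw [← hp, ← p.length_map f]
    exact G'.edist_le _
  · simp [edist_eq_top_of_not_reachable h]

lemma Iso.dist_eq (e : G ≃g G') (u v : V) : G'.dist (e u) (e v) = G.dist u v := by
  have hle : G'.edist (e u) (e v) ≤ G.edist u v := Hom.edist_map_le e.toHom u v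
  have hge : G.edist u v ≤ G'.edist (e u) (e v) := by
    simpa using Hom.edist_map_le e.symm.toHom (e u) (e v)
  simp only [dist, le_antisymm hle hge]

lemma exists_adj_dist_eq_of_dist_eq_succ {r v : V} {k : ℕ} (h : G.dist r v = k + 1) :
    ∃ u, G.Adj u v ∧ G.dist r u = k := by
  obtain ⟨p, hp⟩ := exists_walk_of_dist_ne_zero (by omega : G.dist r v ≠ 0)
  have hnil : ¬ p.Nil := by rw [← Walk.length_eq_zero_iff]; omega
  have hadj := p.adj_penultimate hnil
  refine ⟨p.penultimate, hadj, ?_⟩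
  have hle : G.dist r p.penultimate ≤ k := by
    have := G.dist_le (p.take k)
    rw [Walk.take_length] at this
    simp only [Walk.penultimate, hp, h, add_tsub_cancel_right]
    omega
  have := hadj.diff_dist_adj (u := r)
  omega

end SimpleGraph

lemma Set.ncard_biUnion_le_ncard_mul {ι α : Type*} {t : Set ι} (ht : t.Finite) {s : ι → Set α}
    {k : ℕ} (hk : ∀ i ∈ t, (s i).ncard ≤ k) : (⋃ i ∈ t, s i).ncard ≤ t.ncard * k := by
  have h := ht.toFinset.set_ncard_biUnion_le s
  simp only [Set.Finite.mem_toFinset] at h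
  calc _ ≤ _ := h
    _ ≤ ht.toFinset.card • k := Finset.sum_le_card_nsmul _ _ _ (by simpa using hk)
    _ = t.ncard * k := by rw [smul_eq_mul, Set.ncard_eq_toFinset_card _ ht]

namespace Firefight

variable {V : Type*}

def sphere (G : SimpleGraph V) (r : V) (k : ℕ) : Set V :=
  {v | G.dist r v = k}

lemma ball_eq_biUnion_sphere (G : SimpleGraph V) (r : V) (k : ℕ) :
    ball G r k = ⋃ D ∈ Finset.range (k + 1), sphere G r D := by
  ext v
  simp [ball, sphere]

lemma finite_ball_of_frequently_ncard_ne_zero {G : SimpleGraph V} {r : V}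
    (h : ∃ᶠ k in atTop, (ball G r k).ncard ≠ 0) (k : ℕ) : (ball G r k).Finite := by
  obtain ⟨M, hM, hkM⟩ := (h.and_eventually (eventually_ge_atTop k)).exists
  exact (Set.finite_of_ncard_ne_zero hM).subset fun v (hv : G.dist r v ≤ k) => hv.trans hkM

lemma protSet_finite {s : ℕ → Set V} (hs : ∀ n, (s n).Finite) (n : ℕ) :
    (protSet s n).Finite := by
  induction n with
  | zero => exact Set.finite_empty
  | succ n ih => exact ih.union (hs n)

variable {G : SimpleGraph V} {f : ℕ → ℕ} {X₀ : Set V} {s : ℕ → Set V}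

lemma protSet_ncard_le (hs : ValidStrategy G f X₀ s) (n : ℕ) :
    (protSet s n).ncard ≤ ∑ t ∈ Finset.range n, f (t + 1) := by
  induction n with
  | zero => simp [protSet]
  | succ n ih =>
    rw [Finset.sum_range_succ]
    exact (Set.ncard_union_le _ _).trans (add_le_add ih (hs n).2.1)

lemma ContainsFire.exists_dist_bound (h : ContainsFire G X₀ s) (r : V) :
    ∃ d, ∀ n, ∀ v ∈ burnSet G X₀ s n, G.dist r v ≤ d := by
  obtain ⟨d, hd⟩ := (h.image (G.dist r)).bddAbove
  exact ⟨d, fun n v hv => hd ⟨v, Set.mem_iUnion.2 ⟨n, hv⟩, rfl⟩⟩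

theorem exists_mem_protSet_of_notMem_burnSet {r : V} {R : ℕ} (hX₀ : ball G r R ⊆ X₀)
    (s : ℕ → Set V) (n : ℕ) (v : V) (hv : G.dist r v = R + n) (hvb : v ∉ burnSet G X₀ s n) :
    ∃ i ∈ Finset.Icc 1 n, ∃ w ∈ protSet s i, G.dist r w = R + i ∧ G.dist w v = n - i := by
  induction n generalizing v with
  | zero => exact absurd (hX₀ (show G.dist r v ≤ R by omega)) hvb
  | succ n ih =>
    obtain ⟨u, huv, hu⟩ := SimpleGraph.exists_adj_dist_eq_of_dist_eq_succ hv
    by_cases hvp : v ∈ protSet s (n + 1)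
    · exact ⟨n + 1, by simp, v, hvp, hv, by simp⟩
    have hub : u ∉ burnSet G X₀ s n := fun hub => hvb (Or.inr ⟨hvp, u, hub, huv⟩)
    obtain ⟨i, hi, w, hw, hrw, hwu⟩ := ih u hu hub
    rw [Finset.mem_Icc] at hi
    refine ⟨i, Finset.mem_Icc.2 ⟨hi.1, by omega⟩, w, hw, hrw, ?_⟩
    have hwv := huv.reachable.dist_triangle_right w
    have hrw0 : G.dist r w ≠ 0 := by omega
    have hrv := (SimpleGraph.Reachable.of_dist_ne_zero hrw0).dist_triangle_left v
    rw [SimpleGraph.dist_eq_one_iff_adj.2 huv] at hwv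
    omega

theorem ncard_sphere_le_sum {r : V} {R : ℕ} (hX₀ : ball G r R ⊆ X₀)
    (hs : ValidStrategy G f X₀ s) {σ : ℕ → ℕ}
    (hσ : ∀ w k, (sphere G w k).Finite ∧ (sphere G w k).ncard ≤ σ k) {n : ℕ}
    (hn : ∀ v ∈ sphere G r (R + n), v ∉ burnSet G X₀ s n) :
    (sphere G r (R + n)).ncard ≤
      ∑ i ∈ Finset.Icc 1 n, (∑ t ∈ Finset.range i, f (t + 1)) * σ (n - i) := by
  have hprot := protSet_finite fun n => (hs n).1
  have hcover : sphere G r (R + n) ⊆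
      ⋃ i ∈ Finset.Icc 1 n, ⋃ w ∈ protSet s i, sphere G w (n - i) := by
    intro v hv
    obtain ⟨i, hi, w, hw, -, hwv⟩ := exists_mem_protSet_of_notMem_burnSet hX₀ s n v hv (hn v hv)
    exact Set.mem_biUnion hi (Set.mem_biUnion hw hwv)
  have hfin : (⋃ i ∈ Finset.Icc 1 n, ⋃ w ∈ protSet s i, sphere G w (n - i)).Finite :=
    (Finset.finite_toSet _).biUnion fun i _ => (hprot i).biUnion fun w _ => (hσ w _).1
  calc (sphere G r (R + n)).ncard ≤ _ := Set.ncard_le_ncard hcover hfin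
    _ ≤ ∑ i ∈ Finset.Icc 1 n, (⋃ w ∈ protSet s i, sphere G w (n - i)).ncard :=
      Finset.set_ncard_biUnion_le _ _
    _ ≤ _ := Finset.sum_le_sum fun i _ =>
      (Set.ncard_biUnion_le_ncard_mul (hprot i) fun w _ => (hσ w _).2).trans
        (Nat.mul_le_mul_right _ (protSet_ncard_le hs i))

end Firefight

section Cayley

variable {Γ : Type*} [Group Γ]

def cayleyMulLeft (T : Set Γ) (g : Γ) : cayley Γ T ≃g cayley Γ T where
  toEquiv := Equiv.mulLeft g
  map_rel_iff' := by simp [cayley, mul_assoc]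

lemma cayley_dist_mul_left (T : Set Γ) (g u v : Γ) :
    (cayley Γ T).dist (g * u) (g * v) = (cayley Γ T).dist u v :=
  (cayleyMulLeft T g).dist_eq u v

lemma sphere_cayley (T : Set Γ) (g : Γ) (k : ℕ) :
    sphere (cayley Γ T) g k = (g * ·) '' sphere (cayley Γ T) 1 k := by
  rw [Set.image_mul_left]
  ext v
  simp [sphere, ← cayley_dist_mul_left T g⁻¹ g v]

lemma finite_sphere_cayley {T : Set Γ} (hfin : ∀ k, (ball (cayley Γ T) 1 k).Finite) (g : Γ)
    (k : ℕ) : (sphere (cayley Γ T) g k).Finite := by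
  rw [sphere_cayley]
  exact ((hfin k).subset fun v (hv : _ = k) => hv.le).image _

lemma ncard_sphere_cayley (T : Set Γ) (g : Γ) (k : ℕ) :
    (sphere (cayley Γ T) g k).ncard = (sphere (cayley Γ T) 1 k).ncard := by
  rw [sphere_cayley, Set.ncard_image_of_injective _ (mul_right_injective g)]

end Cayley

lemma Polynomial.monotone_eval_nat (p : ℕ[X]) : Monotone fun n : ℕ => p.eval n := by
  intro m n hmn
  simp only [Polynomial.eval_eq_sum_range]
  gcongr

lemma Polynomial.summable_eval_mul_pow (p : ℕ[X]) {r : ℝ} (hr : ‖r‖ < 1) :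
    Summable fun n : ℕ => ((p.eval n : ℕ) : ℝ) * r ^ n := by
  simp only [Polynomial.eval_eq_sum_range, Nat.cast_sum, Nat.cast_mul, Nat.cast_pow,
    Finset.sum_mul]
  refine summable_sum fun k _ => ?_
  simpa [mul_assoc] using (summable_pow_mul_geometric_of_norm_lt_one k hr).mul_left (p.coeff k : ℝ)

lemma Polynomial.summable_sum_range_eval_mul_pow (p : ℕ[X]) {r : ℝ} (hr0 : 0 ≤ r) (hr1 : r < 1) :
    Summable fun i : ℕ => ((∑ t ∈ Finset.range i, p.eval (t + 1) : ℕ) : ℝ) * r ^ i := by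
  have hle : ∀ i : ℕ, ∑ t ∈ Finset.range i, p.eval (t + 1) ≤ (X * p).eval i := fun i =>
    calc ∑ t ∈ Finset.range i, p.eval (t + 1) ≤ ∑ _t ∈ Finset.range i, p.eval i :=
          Finset.sum_le_sum fun t ht => p.monotone_eval_nat (Finset.mem_range.1 ht)
      _ = (X * p).eval i := by simp
  refine Summable.of_nonneg_of_le (fun i => by positivity)
    (fun i => mul_le_mul_of_nonneg_right (Nat.cast_le.2 (hle i)) (pow_nonneg hr0 i))
    ((X * p).summable_eval_mul_pow (by rwa [Real.norm_eq_abs, abs_of_nonneg hr0]))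

theorem le_mul_pow_of_le_sum_mul {a b : ℕ → ℝ} {μ K : ℝ} {R N : ℕ} (hμ : 0 < μ) (hK : 0 ≤ K)
    (hb : ∀ i, 0 ≤ b i) (hbμ : ∀ n, ∑ i ∈ Finset.Icc 1 n, b i * μ⁻¹ ^ i ≤ μ ^ R)
    (hsmall : ∀ D < R + N, a D ≤ K * μ ^ D)
    (hrec : ∀ n, N ≤ n → a (R + n) ≤ ∑ i ∈ Finset.Icc 1 n, b i * a (n - i)) (D : ℕ) :
    a D ≤ K * μ ^ D := by
  induction D using Nat.strong_induction_on with | _ D ih => ?_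
  rcases lt_or_ge D (R + N) with hD | hD
  · exact hsmall D hD
  obtain ⟨n, rfl⟩ := Nat.exists_eq_add_of_le (le_trans (Nat.le_add_right R N) hD)
  calc a (R + n) ≤ ∑ i ∈ Finset.Icc 1 n, b i * a (n - i) := hrec n (by omega)
    _ ≤ ∑ i ∈ Finset.Icc 1 n, b i * (K * μ ^ (n - i)) := by
      gcongr with i hi
      · exact hb i
      · exact ih _ (by rw [Finset.mem_Icc] at hi; omega)
    _ = K * μ ^ n * ∑ i ∈ Finset.Icc 1 n, b i * μ⁻¹ ^ i := by
      rw [Finset.mul_sum]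
      refine Finset.sum_congr rfl fun i hi => ?_
      rw [pow_sub₀ _ hμ.ne' (Finset.mem_Icc.1 hi).2, inv_pow]
      ring
    _ ≤ K * μ ^ n * μ ^ R := by gcongr; exact hbμ n
    _ = K * μ ^ (R + n) := by ring

lemma sum_range_pow_le_of_one_lt {μ : ℝ} (hμ : 1 < μ) (n : ℕ) :
    ∑ i ∈ Finset.range n, μ ^ i ≤ μ ^ n / (μ - 1) := by
  rw [geom_sum_eq hμ.ne']
  gcongr
  · linarith

lemma eventually_pow_le_of_tendsto_rpow_inv {u : ℕ → ℝ} {α lam : ℝ} (hu : ∀ k, 0 ≤ u k)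
    (h : Tendsto (fun k : ℕ => u k ^ (k : ℝ)⁻¹) atTop (𝓝 α)) (hlam0 : 0 ≤ lam) (hlam : lam < α) :
    ∀ᶠ k in atTop, lam ^ k ≤ u k := by
  filter_upwards [h.eventually (eventually_gt_nhds hlam), eventually_ne_atTop 0] with k hk hk0
  calc lam ^ k ≤ (u k ^ (k : ℝ)⁻¹) ^ k := pow_le_pow_left₀ hlam0 hk.le k
    _ = u k := Real.rpow_inv_natCast_pow (hu k) hk0

lemma not_eventually_pow_le_mul_pow {lam μ C : ℝ} (hμ : 0 < μ) (h : μ < lam) :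
    ¬ ∀ᶠ k : ℕ in atTop, lam ^ k ≤ C * μ ^ k := by
  intro hle
  have hdiv := (tendsto_pow_atTop_atTop_of_one_lt ((one_lt_div hμ).2 h)).eventually_gt_atTop C
  obtain ⟨k, hk, hCk⟩ := (hle.and hdiv).exists
  have : C * μ ^ k < lam ^ k :=
    calc C * μ ^ k < (lam / μ) ^ k * μ ^ k := by gcongr
      _ = lam ^ k := by rw [div_pow, div_mul_cancel₀ _ (pow_ne_zero _ hμ.ne')]
  linarith

theorem exists_ncard_ball_le_of_containment {Γ : Type*} [Group Γ] {T : Set Γ}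
    (hfin : ∀ k, (ball (cayley Γ T) 1 k).Finite) {p : ℕ[X]}
    (hC : Containment (cayley Γ T) fun n => p.eval n) {μ : ℝ} (hμ : 1 < μ) :
    ∃ C : ℝ, ∀ k, ((ball (cayley Γ T) 1 k).ncard : ℝ) ≤ C * μ ^ k := by
  set G := cayley Γ T
  set a : ℕ → ℝ := fun D => ((sphere G 1 D).ncard : ℝ)
  set b : ℕ → ℝ := fun i => ((∑ t ∈ Finset.range i, p.eval (t + 1) : ℕ) : ℝ)
  have hμ0 : 0 < μ := zero_lt_one.trans hμ
  have hsum := p.summable_sum_range_eval_mul_pow (inv_nonneg.2 hμ0.le) (inv_lt_one_of_one_lt₀ hμ)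
  obtain ⟨R, hR⟩ := ((tendsto_pow_atTop_atTop_of_one_lt hμ).eventually_ge_atTop
    (∑' i, b i * μ⁻¹ ^ i)).exists
  obtain ⟨s, hs, hcont⟩ := hC (ball G 1 R) (hfin R)
  obtain ⟨d, hd⟩ := hcont.exists_dist_bound 1
  have hrec : ∀ n, d + 1 ≤ n → a (R + n) ≤ ∑ i ∈ Finset.Icc 1 n, b i * a (n - i) := by
    intro n hn
    have hout : ∀ v ∈ sphere G 1 (R + n), v ∉ burnSet G (ball G 1 R) s n :=
      fun v (hv : _ = _) hvb => by have := hd n v hvb; omega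
    have key := ncard_sphere_le_sum subset_rfl hs
      (fun w k => ⟨finite_sphere_cayley hfin w k, (ncard_sphere_cayley T w k).le⟩) hout
    simp only [a, b]
    exact_mod_cast key
  set K := ∑ D ∈ Finset.range (R + (d + 1)), a D
  have ha : ∀ D, a D ≤ K * μ ^ D := by
    refine le_mul_pow_of_le_sum_mul hμ0 (by positivity) (fun i => by positivity)
      (fun n => (hsum.sum_le_tsum _ fun i _ => by positivity).trans hR)
      (fun D hD => ?_) hrec
    calc a D ≤ K := Finset.single_le_sum (fun D _ => by positivity) (Finset.mem_range.2 hD)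
      _ ≤ K * μ ^ D := le_mul_of_one_le_right (by positivity) (one_le_pow₀ hμ.le)
  refine ⟨K * μ / (μ - 1), fun k => ?_⟩
  calc ((ball G 1 k).ncard : ℝ) ≤ ∑ D ∈ Finset.range (k + 1), a D := by
        simp only [a, ball_eq_biUnion_sphere]
        exact_mod_cast Finset.set_ncard_biUnion_le _ _
    _ ≤ ∑ D ∈ Finset.range (k + 1), K * μ ^ D := Finset.sum_le_sum fun D _ => ha D
    _ ≤ K * (μ ^ (k + 1) / (μ - 1)) := by
        rw [← Finset.mul_sum]
        gcongr
        exact sum_range_pow_le_of_one_lt hμ _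
    _ = K * μ / (μ - 1) * μ ^ k := by ring

theorem stmt_13_general {Γ : Type*} [Group Γ] (S : Finset Γ)
    (α : ℝ)
    (hα : Filter.Tendsto
      (fun k : ℕ => ((ball (cayley Γ (S : Set Γ)) 1 k).ncard : ℝ) ^ ((k : ℝ)⁻¹))
      Filter.atTop (nhds α))
    (hα1 : 1 < α) :
    ∀ p : Polynomial ℕ, ¬ Containment (cayley Γ (S : Set Γ)) (fun n => p.eval n) := by
  intro p hC
  obtain ⟨μ, hμ1, hμα⟩ := exists_between hα1
  obtain ⟨lam, hμlam, hlamα⟩ := exists_between hμα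
  have hlam0 : 0 < lam := by linarith
  have hgrowth := eventually_pow_le_of_tendsto_rpow_inv (fun k => Nat.cast_nonneg _) hα
    hlam0.le hlamα
  have hfin : ∀ k, (ball (cayley Γ S) 1 k).Finite :=
    finite_ball_of_frequently_ncard_ne_zero <| Eventually.frequently <| hgrowth.mono fun k hk =>
      Nat.cast_ne_zero.1 ((pow_pos hlam0 k).trans_le hk).ne'
  obtain ⟨C, hC⟩ := exists_ncard_ball_le_of_containment hfin hC hμ1
  exact not_eventually_pow_le_mul_pow (by linarith) hμlam (hgrowth.mono fun k hk => hk.trans (hC k))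

/-- a Cayley graph of a finitely generated group of exponential growth
(growth rate `α > 1`) does not satisfy `p(n)`-containment for any polynomial `p`. -/
theorem stmt_13 {Γ : Type*} [Group Γ] (S : Finset Γ)
    (hgen : Subgroup.closure (S : Set Γ) = ⊤) (α : ℝ)
    (hα : Filter.Tendsto
      (fun k : ℕ => ((ball (cayley Γ (S : Set Γ)) 1 k).ncard : ℝ) ^ ((k : ℝ)⁻¹))
      Filter.atTop (nhds α))
    (hα1 : 1 < α) :
    ∀ p : Polynomial ℕ, ¬ Containment (cayley Γ (S : Set Γ)) (fun n => p.eval n) :=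
  stmt_13_general S α hα hα1
end
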